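/- Let I be a small cofiltered category, let Y : I → (simplicial profinite sets) be a diagram with limit lim_i Y_i (computed levelwise), let M be a finite abelian group with the discrete topology, and let n ≥ 0. Then the canonical maps colim_i C^n(Y_i; M) → C^n(lim_i Y_i; M) and colim_i Z^n(Y_i; M) → Z^n(lim_i Y_i; M) are bijective. -/

import Mathlib

universe u

open CategoryTheory Simplicial Limits Opposite

namespace ProfiniteCochains

instance (priority := 100) discreteTopologicalAddGroup
    (M : Type*) [TopologicalSpace M] [DiscreteTopology M] [AddGroup M] :
    IsTopologicalAddGroup M where
  continuous_add := continuous_of_discreteTopology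
  continuous_neg := continuous_of_discreteTopology

variable (M : Type u) [AddCommGroup M] [TopologicalSpace M] [IsTopologicalAddGroup M]

/-- The differential `δ : C^n(X;M) → C^{n+1}(X;M)`, `δ(α) = ∑ₖ (-1)^k α ∘ dₖ`. -/
noncomputable def delta (X : SimplicialObject Profinite.{u}) (n : ℕ)
    (α : C(X.obj (op (SimplexCategory.mk n)), M)) :
    C(X.obj (op (SimplexCategory.mk (n + 1))), M) :=
  ∑ k : Fin (n + 2), (-1 : ℤ) ^ (k : ℕ) • α.comp (ConcreteCategory.hom (C := Profinite.{u}) (X.δ k))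

variable (I : Type u) [SmallCategory I] (Y : I ⥤ SimplicialObject Profinite.{u}) (n : ℕ)

/-- The filtered diagram of continuous `n`-cochains `i ↦ C^n(Y_i; M)`. -/
noncomputable def CnF : Iᵒᵖ ⥤ Type u where
  obj i := C((Y.obj i.unop).obj (op (SimplexCategory.mk n)), M)
  map f := TypeCat.ofHom fun g => g.comp (ConcreteCategory.hom (C := Profinite.{u}) ((Y.map f.unop).app (op (SimplexCategory.mk n))))

lemma pi_app_eq {i j : Iᵒᵖ} (f : i ⟶ j) :
    (ContinuousMap.comp (ConcreteCategory.hom (C := Profinite.{u}) ((Y.map f.unop).app (op (SimplexCategory.mk n))))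
      (ConcreteCategory.hom (C := Profinite.{u}) ((limit.π Y j.unop).app (op (SimplexCategory.mk n)))) :
        C((limit Y).obj (op (SimplexCategory.mk n)), _)) =
    ConcreteCategory.hom (C := Profinite.{u}) ((limit.π Y i.unop).app (op (SimplexCategory.mk n))) := by
  exact congrArg (fun (t : limit Y ⟶ Y.obj i.unop) =>
    (ConcreteCategory.hom (C := Profinite.{u}) (t.app (op (SimplexCategory.mk n))) : C(_, _))) (limit.w Y f.unop)

/-- The canonical cocone on `i ↦ C^n(Y_i; M)` with point `C^n(lim_i Y_i; M)`, given by
composition with the projections of the limit. -/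
noncomputable def CnCocone : Cocone (CnF M I Y n) where
  pt := C((limit Y).obj (op (SimplexCategory.mk n)), M)
  ι :=
    { app := fun i => TypeCat.ofHom fun g => g.comp (ConcreteCategory.hom (C := Profinite.{u}) ((limit.π Y i.unop).app (op (SimplexCategory.mk n))))
      naturality := fun i j f => by
        ext g : 3
        show ((g : C((Y.obj i.unop).obj (op (SimplexCategory.mk n)), M)).comp _).comp _ = _
        exact congrArg (fun h => ContinuousMap.comp (g : C(_, M)) h) (pi_app_eq I Y n f) }

lemma delta_comp {X Z : SimplicialObject Profinite.{u}} (f : X ⟶ Z) (m : ℕ)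
    (α : C(Z.obj (op (SimplexCategory.mk m)), M)) :
    delta M X m (α.comp (ConcreteCategory.hom (C := Profinite.{u}) (f.app (op (SimplexCategory.mk m))))) =
      (delta M Z m α).comp (ConcreteCategory.hom (C := Profinite.{u}) (f.app (op (SimplexCategory.mk (m + 1))))) := by
  ext x
  simp only [delta, ContinuousMap.coe_sum, Finset.sum_apply, ContinuousMap.comp_apply,
    ContinuousMap.coe_smul, Pi.smul_apply, ContinuousMap.coe_zsmul]
  refine Finset.sum_congr rfl fun k _ => ?_
  congr 1
  have h : (ConcreteCategory.hom (C := Profinite.{u}) (f.app (op (SimplexCategory.mk m)))).comp (ConcreteCategory.hom (C := Profinite.{u}) (X.δ k) : C(_, _)) =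
      (ConcreteCategory.hom (C := Profinite.{u}) (Z.δ k) : C(_, _)).comp (ConcreteCategory.hom (C := Profinite.{u}) (f.app (op (SimplexCategory.mk (m + 1))))) :=
    congrArg (ConcreteCategory.hom (C := Profinite.{u})) (f.naturality _)
  exact congrArg α (ContinuousMap.congr_fun h x)

/-- The filtered diagram of continuous `n`-cocycles `i ↦ Z^n(Y_i; M)`. -/
noncomputable def ZnF : Iᵒᵖ ⥤ Type u where
  obj i := { α : C((Y.obj i.unop).obj (op (SimplexCategory.mk n)), M) //
    delta M (Y.obj i.unop) n α = 0 }
  map f := TypeCat.ofHom fun g => ⟨g.1.comp (ConcreteCategory.hom (C := Profinite.{u}) ((Y.map f.unop).app (op (SimplexCategory.mk n)))), by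
    rw [delta_comp, g.2]
    ext x
    rfl⟩
  map_id i := by
    ext g : 3
    apply Subtype.ext
    show g.1.comp (ConcreteCategory.hom (C := Profinite.{u}) ((Y.map (𝟙 i.unop)).app (op (SimplexCategory.mk n)))) = g.1
    rw [CategoryTheory.Functor.map_id]
    rfl
  map_comp f g := by
    ext h : 3
    apply Subtype.ext
    show h.1.comp (ConcreteCategory.hom (C := Profinite.{u}) ((Y.map (g.unop ≫ f.unop)).app (op (SimplexCategory.mk n)))) =
      (h.1.comp (ConcreteCategory.hom (C := Profinite.{u}) ((Y.map f.unop).app (op (SimplexCategory.mk n))))).comp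
        (ConcreteCategory.hom (C := Profinite.{u}) ((Y.map g.unop).app (op (SimplexCategory.mk n))))
    rw [CategoryTheory.Functor.map_comp]
    rfl

/-- The canonical cocone on `i ↦ Z^n(Y_i; M)` with point `Z^n(lim_i Y_i; M)`. -/
noncomputable def ZnCocone : Cocone (ZnF M I Y n) where
  pt := { α : C((limit Y).obj (op (SimplexCategory.mk n)), M) //
    delta M (limit Y) n α = 0 }
  ι :=
    { app := fun i => TypeCat.ofHom fun g => ⟨g.1.comp (ConcreteCategory.hom (C := Profinite.{u}) ((limit.π Y i.unop).app (op (SimplexCategory.mk n)))), by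
        rw [delta_comp, g.2]
        ext x
        rfl⟩
      naturality := fun i j f => by
        ext g : 3
        apply Subtype.ext
        show (g.1.comp _).comp _ = _
        rw [ContinuousMap.comp_assoc, pi_app_eq]
        rfl }

end ProfiniteCochains

open ProfiniteCochains

/-!
A continuous map from a cofiltered limit of profinite sets to a discrete space factors through
some stage (`Profinite.exists_locallyConstant`), and two maps at a stage that agree on the limit
already agree at a later stage: otherwise the closed sets where they differ, pulled back along all
maps into that stage, would form a cofiltered system of nonempty compact spaces, whose limit
(Kőnig's lemma) gives a point of the limit where they differ. Applied levelwise, these two facts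
say that `C^n(lim Y; M)` is the filtered colimit of the `C^n(Y_i; M)`. For cocycles, a cochain
lifting a cocycle has a coboundary that vanishes on the limit, hence (injectivity in degree `n + 1`)
already vanishes at a later stage.
-/

universe v

namespace Profinite

variable {J : Type v} [SmallCategory J] [IsCofiltered J] {F : J ⥤ Profinite.{max u v}}
  {c : Cone F}

theorem exists_preimage_map_eq_empty (hc : IsLimit c) {i : J} {D : Set (F.obj i)}
    (hD : IsClosed D) (h : c.π.app i ⁻¹' D = ∅) :
    ∃ (j : J) (f : j ⟶ i), F.map f ⁻¹' D = ∅ := by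
  by_contra! hne
  let G : Over i ⥤ TopCat.{max u v} :=
    { obj e := TopCat.of (F.map e.hom ⁻¹' D)
      map {e e'} φ := TopCat.ofHom ⟨fun y => ⟨F.map φ.left y, by
          simpa only [Set.mem_preimage, ← ConcreteCategory.comp_apply, ← F.map_comp, Over.w φ]
            using y.2⟩, by fun_prop⟩ }
  have (e : Over i) : Nonempty (G.obj e) := (hne e.left e.hom).to_subtype
  have (e : Over i) : CompactSpace (G.obj e) :=
    isCompact_iff_compactSpace.mp ((hD.preimage (F.map e.hom).hom.hom.continuous).isCompact)
  have (e : Over i) : T2Space (G.obj e) := inferInstanceAs (T2Space (Subtype _))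
  obtain ⟨s⟩ := TopCat.nonempty_limitCone_of_compact_t2_cofiltered_system G
  have hc' := isLimitOfPreserves (toTopCat ⋙ forget TopCat)
    ((Functor.Initial.isLimitWhiskerEquiv (Over.forget i) c).symm hc)
  obtain ⟨x, hx, -⟩ := (Types.isLimit_iff _).mp ⟨hc'⟩ (fun e => (s.1 e).1)
    (fun φ => congrArg Subtype.val (s.2 φ))
  have hxD : c.π.app i x ∈ F.map (𝟙 i) ⁻¹' D :=
    hx (Over.mk (𝟙 i)) ▸ (s.1 (Over.mk (𝟙 i))).2
  rw [F.map_id] at hxD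
  exact Set.eq_empty_iff_forall_notMem.mp h x hxD

variable {X : Type*} [TopologicalSpace X] [DiscreteTopology X]

theorem exists_comp_π_eq (hc : IsLimit c) (g : C(c.pt, X)) :
    ∃ (j : J) (g' : C(F.obj j, X)),
      g'.comp (ConcreteCategory.hom (C := Profinite) (c.π.app j)) = g := by
  obtain ⟨j, g', hg'⟩ :=
    exists_locallyConstant c hc ⟨g, (IsLocallyConstant.iff_continuous g).mpr g.continuous⟩
  exact ⟨j, g'.toContinuousMap,
    ContinuousMap.ext fun x => (LocallyConstant.congr_fun hg' x).symm⟩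

theorem exists_comp_map_eq_of_comp_π_eq (hc : IsLimit c) {i : J} (g g' : C(F.obj i, X))
    (h : g.comp (ConcreteCategory.hom (C := Profinite) (c.π.app i)) =
      g'.comp (ConcreteCategory.hom (C := Profinite) (c.π.app i))) :
    ∃ (j : J) (f : j ⟶ i), g.comp (ConcreteCategory.hom (C := Profinite) (F.map f)) =
      g'.comp (ConcreteCategory.hom (C := Profinite) (F.map f)) := by
  have hD : IsClosed {y | g y ≠ g' y} :=
    (isClosed_discrete ({p | p.1 ≠ p.2} : Set (X × X))).preimage
      (g.continuous.prodMk g'.continuous)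
  obtain ⟨j, f, hf⟩ := exists_preimage_map_eq_empty hc hD
    (Set.eq_empty_of_forall_notMem fun x hx => hx (ContinuousMap.congr_fun h x))
  exact ⟨j, f, ContinuousMap.ext fun y => not_not.mp fun hy =>
    Set.eq_empty_iff_forall_notMem.mp hf y hy⟩

end Profinite

theorem Types.bijective_colimit_desc_of_isColimit {J : Type*} [Category* J] {F : J ⥤ Type v}
    [HasColimit F] {t : Cocone F} (ht : IsColimit t) : Function.Bijective (colimit.desc F t) :=
  (isIso_iff_bijective _).mp
    (inferInstanceAs (IsIso ((colimit.isColimit F).coconePointUniqueUpToIso ht).hom))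

namespace ProfiniteCochains

section Differential

variable (M : Type u) [AddCommGroup M] [TopologicalSpace M] [IsTopologicalAddGroup M]
  (I : Type u) [SmallCategory I] (Y : I ⥤ SimplicialObject Profinite.{u}) (n : ℕ)

lemma delta_cnCocone_ι (j : Iᵒᵖ) (g : (CnF M I Y n).obj j) :
    delta M (limit Y) n ((CnCocone M I Y n).ι.app j g) =
      (CnCocone M I Y (n + 1)).ι.app j (delta M (Y.obj j.unop) n g) :=
  delta_comp M (limit.π Y j.unop) n g

lemma delta_cnF_map {i j : Iᵒᵖ} (f : i ⟶ j) (g : (CnF M I Y n).obj i) :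
    delta M (Y.obj j.unop) n ((CnF M I Y n).map f g) =
      (CnF M I Y (n + 1)).map f (delta M (Y.obj i.unop) n g) :=
  delta_comp M (Y.map f.unop) n g

end Differential

variable (M : Type u) [AddCommGroup M] [TopologicalSpace M] [DiscreteTopology M]
  (I : Type u) [SmallCategory I] [IsCofiltered I] (Y : I ⥤ SimplicialObject Profinite.{u})
  (n : ℕ)

noncomputable def isColimitCnCocone : IsColimit (CnCocone M I Y n) := by
  have hY := isLimitOfPreserves
    ((evaluation SimplexCategoryᵒᵖ Profinite.{u}).obj (op (SimplexCategory.mk n)))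
    (limit.isLimit Y)
  refine Types.FilteredColimit.isColimitOf' _ _ (fun β => ?_) (fun i a b h => ?_)
  · obtain ⟨j, g, rfl⟩ := Profinite.exists_comp_π_eq hY β
    exact ⟨op j, g, rfl⟩
  · obtain ⟨j, f, hf⟩ := Profinite.exists_comp_map_eq_of_comp_π_eq hY a b h
    exact ⟨op j, f.op, hf⟩

noncomputable def isColimitZnCocone : IsColimit (ZnCocone M I Y n) := by
  refine Types.FilteredColimit.isColimitOf' _ _ (fun β => ?_) (fun i a b h => ?_)
  · obtain ⟨j, g, hg⟩ := Types.jointly_surjective_of_isColimit (isColimitCnCocone M I Y n) β.1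
    have hδ : (CnCocone M I Y (n + 1)).ι.app j (delta M _ n g) =
        (CnCocone M I Y (n + 1)).ι.app j (0 : C(_, M)) := by
      rw [← delta_cnCocone_ι, hg, β.2]
      exact (ContinuousMap.zero_comp _).symm
    obtain ⟨k, f, hf⟩ := (Types.FilteredColimit.isColimit_eq_iff'
      (isColimitCnCocone M I Y (n + 1)) _ _).mp hδ
    refine ⟨k, ⟨(CnF M I Y n).map f g, ?_⟩, Subtype.ext ?_⟩
    · rw [delta_cnF_map, hf]
      exact ContinuousMap.zero_comp _
    · rw [← hg]
      exact (Cocone.w_apply (CnCocone M I Y n) f g).symm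
  · obtain ⟨k, f, hf⟩ := (Types.FilteredColimit.isColimit_eq_iff'
      (isColimitCnCocone M I Y n) a.1 b.1).mp (congrArg Subtype.val h)
    exact ⟨k, f, Subtype.ext hf⟩

end ProfiniteCochains

theorem cochains_and_cocycles_colimit_comparison_bijective
    (I : Type u) [SmallCategory I] [IsCofiltered I]
    (Y : I ⥤ SimplicialObject Profinite.{u})
    (M : Type u) [AddCommGroup M] [TopologicalSpace M] [DiscreteTopology M]
    (n : ℕ) :
    Function.Bijective (colimit.desc (CnF M I Y n) (CnCocone M I Y n)) ∧
    Function.Bijective (colimit.desc (ZnF M I Y n) (ZnCocone M I Y n)) :=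
  ⟨Types.bijective_colimit_desc_of_isColimit (isColimitCnCocone M I Y n),
    Types.bijective_colimit_desc_of_isColimit (isColimitZnCocone M I Y n)⟩
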